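/- Let T be a tree on n vertices. If T has a perfect matching, then γ_WC(T) = s_WC(T) = n/2; if T has no perfect matching, then Dominator does not win the unbiased Waiter-Client domination game on T (equivalently γ_WC(T) = s_WC(T) = ∞). -/

import Mathlib

/-- `D` is a dominating set of `G`. -/
def IsDomSet {V : Type} (G : SimpleGraph V) (D : Set V) : Prop :=
  ∀ v, v ∈ D ∨ ∃ u ∈ D, G.Adj u v

/-- The unbiased Waiter-Client game on the hypergraph with winning sets `F`.
`wcWin F t W C` means: with Waiter owning `W` and Client owning `C`, Waiter has
a strategy to claim all elements of some winning set within at most `t` further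
rounds. In each round Waiter offers two unclaimed elements; Client keeps one
and the other goes to Waiter (a final single unclaimed element would go to
Client, so it can never help Waiter). -/
def wcWin {X : Type} (F : Set (Set X)) : ℕ → Set X → Set X → Prop
  | 0, W, _ => ∃ e ∈ F, e ⊆ W
  | (t+1), W, C => (∃ e ∈ F, e ⊆ W) ∨
      ∃ x y, x ≠ y ∧ x ∉ W ∪ C ∧ y ∉ W ∪ C ∧
        wcWin F t (insert x W) (insert y C) ∧ wcWin F t (insert y W) (insert x C)

/-- `γ_WC(G)`: the minimum number of rounds within which Dominator (as Waiter)
can guarantee to claim a dominating set in the Waiter-Client domination game on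
`G`, and `⊤` (infinity) if she cannot win at all. -/
noncomputable def gammaWC {V : Type} [Finite V] (G : SimpleGraph V) : ℕ∞ :=
  sInf {n : ℕ∞ | ∃ t : ℕ, n = t ∧ wcWin {D : Set V | IsDomSet G D} t ∅ ∅}

/-- `s_WC(G)`: the minimum size of a dominating set Dominator (as Waiter) can
guarantee to claim in the Waiter-Client domination game on `G` (with no bound
on the number of rounds, `Nat.card V` rounds being enough to exhaust the
board), and `⊤` (infinity) if she cannot win at all. -/
noncomputable def sizeWC {V : Type} [Finite V] (G : SimpleGraph V) : ℕ∞ :=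
  sInf {n : ℕ∞ | ∃ s : ℕ, n = s ∧
    wcWin {D : Set V | IsDomSet G D ∧ D.ncard ≤ s} (Nat.card V) ∅ ∅}

/-!
With a perfect matching, Waiter offers the matching edges one at a time and ends up with one end of
each: a dominating set of `n / 2` vertices, claimed in `n / 2` rounds.

Conversely, let `u` be a leaf of a forest and `v` its neighbour, so every dominating set contains
`u` or `v`. If Waiter offers only one of them, Client takes it, later takes the other one too, and
wins. So Waiter must offer `{u, v}` together; Client takes `v`, and the rest of the game is a game
on the forest without `u` and `v`, where Waiter's set, restricted, still dominates and has one
vertex fewer. By induction on the number of vertices, a win for Waiter forces a perfect matching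
and a dominating set of at least `n / 2` vertices. Since Waiter gains one vertex per round, she
also needs at least `n / 2` rounds.
-/

section Game

variable {X : Type} {F : Set (Set X)}

theorem wcWin.mono {F' : Set (Set X)} (hFF' : F ⊆ F') {t : ℕ} {W C : Set X}
    (h : wcWin F t W C) : wcWin F' t W C := by
  induction t generalizing W C with
  | zero => obtain ⟨e, he, heW⟩ := h; exact ⟨e, hFF' he, heW⟩
  | succ t ih =>
    rcases h with ⟨e, he, heW⟩ | ⟨x, y, hxy, hx, hy, h₁, h₂⟩
    · exact Or.inl ⟨e, hFF' he, heW⟩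
    · exact Or.inr ⟨x, y, hxy, hx, hy, ih h₁, ih h₂⟩

theorem wcWin.succ {t : ℕ} {W C : Set X} (h : wcWin F t W C) : wcWin F (t + 1) W C := by
  induction t generalizing W C with
  | zero => exact Or.inl h
  | succ t ih =>
    rcases h with h | ⟨x, y, hxy, hx, hy, h₁, h₂⟩
    · exact Or.inl h
    · exact Or.inr ⟨x, y, hxy, hx, hy, ih h₁, ih h₂⟩

theorem wcWin.mono_rounds {t t' : ℕ} (htt' : t ≤ t') {W C : Set X} (h : wcWin F t W C) :
    wcWin F t' W C := by
  induction htt' with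
  | refl => exact h
  | step _ ih => exact ih.succ

theorem wcWin.nonempty {t : ℕ} {W C : Set X} (h : wcWin F t W C) : F.Nonempty := by
  induction t generalizing W C with
  | zero => obtain ⟨e, he, -⟩ := h; exact ⟨e, he⟩
  | succ t ih =>
    rcases h with ⟨e, he, -⟩ | ⟨x, y, -, -, -, h₁, -⟩
    · exact ⟨e, he⟩
    · exact ih h₁

theorem wcWin.ncard_le [Finite X] {s t : ℕ} {W C : Set X} (h : wcWin F t W C)
    (hs : W.ncard + t ≤ s) : wcWin {D | D ∈ F ∧ D.ncard ≤ s} t W C := by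
  induction t generalizing W C with
  | zero =>
    obtain ⟨e, he, heW⟩ := h
    exact ⟨e, ⟨he, (Set.ncard_le_ncard heW).trans (by omega)⟩, heW⟩
  | succ t ih =>
    rcases h with ⟨e, he, heW⟩ | ⟨x, y, hxy, hx, hy, h₁, h₂⟩
    · exact Or.inl ⟨e, ⟨he, (Set.ncard_le_ncard heW).trans (by omega)⟩, heW⟩
    · refine Or.inr ⟨x, y, hxy, hx, hy, ih h₁ ?_, ih h₂ ?_⟩
      · have := Set.ncard_insert_le x W; omega
      · have := Set.ncard_insert_le y W; omega

theorem not_wcWin_of_invariant (I : Set X → Set X → Prop)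
    (hI : ∀ W C, I W C → ∀ e ∈ F, ¬ e ⊆ W)
    (hstep : ∀ W C x y, I W C → x ≠ y → x ∉ W ∪ C → y ∉ W ∪ C →
      I (insert x W) (insert y C) ∨ I (insert y W) (insert x C))
    {t : ℕ} {W C : Set X} (hWC : I W C) : ¬ wcWin F t W C := by
  induction t generalizing W C with
  | zero => rintro ⟨e, he, heW⟩; exact hI W C hWC e he heW
  | succ t ih =>
    rintro (⟨e, he, heW⟩ | ⟨x, y, hxy, hx, hy, h₁, h₂⟩)
    · exact hI W C hWC e he heW
    · rcases hstep W C x y hWC hxy hx hy with h | h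
      · exact ih h h₁
      · exact ih h h₂

theorem not_wcWin_of_forall_mem {u : X} (hF : ∀ e ∈ F, u ∈ e) {t : ℕ} {W C : Set X}
    (hu : u ∉ W) : ¬ wcWin F t W C := by
  refine not_wcWin_of_invariant (fun W _ ↦ u ∉ W) (fun W _ hu e he heW ↦ hu (heW (hF e he)))
    (fun W C x y hu hxy _ _ ↦ ?_) hu
  by_cases hxu : x = u
  · subst hxu; right; simp [hu, hxy]
  · left; simp [hu, Ne.symm hxu]

-- Client's strategy: take `u` or `v` whenever one of them is offered.
theorem not_wcWin_of_mem_or_mem {u v : X} (hF : ∀ e ∈ F, u ∈ e ∨ v ∈ e) {t : ℕ}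
    {W C : Set X} (hu : u ∉ W) (hv : v ∉ W) (hC : u ∈ C ∨ v ∈ C) : ¬ wcWin F t W C := by
  refine not_wcWin_of_invariant (fun W C ↦ u ∉ W ∧ v ∉ W ∧ (u ∈ C ∨ v ∈ C)) ?_ ?_ ⟨hu, hv, hC⟩
  · rintro W C ⟨hu, hv, -⟩ e he heW
    rcases hF e he with h | h
    exacts [hu (heW h), hv (heW h)]
  · rintro W C x y ⟨hu, hv, hC⟩ hxy hx hy
    simp only [Set.mem_union, not_or] at hx hy
    by_cases hx' : x = u ∨ x = v
    · right; simp only [Set.mem_insert_iff]; grind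
    · left; simp only [Set.mem_insert_iff]; grind

end Game

section Reduction

variable {X : Type} {u v : X}

theorem Set.preimage_val_insert_of_mem {S : Set X} {x : X} (hx : x ∈ S) (W : Set X) :
    (Subtype.val ⁻¹' insert x W : Set S) = insert ⟨x, hx⟩ (Subtype.val ⁻¹' W) := by
  ext ⟨a, ha⟩; simp [Subtype.ext_iff]

theorem Set.preimage_val_insert_of_notMem {S : Set X} {x : X} (hx : x ∉ S) (W : Set X) :
    (Subtype.val ⁻¹' insert x W : Set S) = Subtype.val ⁻¹' W := by
  ext ⟨a, ha⟩; simp only [Set.mem_preimage, Set.mem_insert_iff, or_iff_right_iff_imp]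
  rintro rfl; exact absurd ha hx

theorem Set.ncard_preimage_val_lt [Finite X] {S e : Set X} {x : X} (hx : x ∈ e) (hxS : x ∉ S) :
    (Subtype.val ⁻¹' e : Set S).ncard < e.ncard := by
  rw [show (Subtype.val ⁻¹' e : Set S) = {y : S | ↑y ∈ e} from rfl, Set.ncard_subtype]
  exact Set.ncard_lt_ncard ⟨Set.inter_subset_left, fun h ↦ hxS (h hx).2⟩

/-- Client answers the offer `{u, v}` by taking `v`; an offer of only one of `u`, `v` loses for
Waiter by `not_wcWin_of_mem_or_mem`. -/
theorem wcWin.restrict_compl_pair {P : Set (Set X)} {P' : Set (Set ({u, v}ᶜ : Set X))}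
    (hu : ∀ e ∈ P, v ∉ e → u ∈ e) (hP' : ∀ e ∈ P, v ∉ e → Subtype.val ⁻¹' e ∈ P')
    {t : ℕ} {W C : Set X} (hWC : (u ∉ W ∪ C ∧ v ∉ W ∪ C) ∨ (u ∈ W ∧ v ∈ C ∧ v ∉ W))
    (h : wcWin P t W C) : wcWin P' t (Subtype.val ⁻¹' W) (Subtype.val ⁻¹' C) := by
  have huv : ∀ e ∈ P, u ∈ e ∨ v ∈ e := fun e he ↦ (em (v ∈ e)).elim .inr (.inl ∘ hu e he)
  have hvW : ∀ {W C : Set X}, ((u ∉ W ∪ C ∧ v ∉ W ∪ C) ∨ (u ∈ W ∧ v ∈ C ∧ v ∉ W)) → v ∉ W := by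
    rintro W C (⟨-, h⟩ | ⟨-, -, h⟩) <;> simp_all
  induction t generalizing W C with
  | zero =>
    obtain ⟨e, he, heW⟩ := h
    exact ⟨_, hP' e he fun hv ↦ hvW hWC (heW hv), Set.preimage_mono heW⟩
  | succ t ih =>
    rcases h with ⟨e, he, heW⟩ | ⟨x, y, hxy, hx, hy, h₁, h₂⟩
    · exact Or.inl ⟨_, hP' e he fun hv ↦ hvW hWC (heW hv), Set.preimage_mono heW⟩
    simp only [Set.mem_union, not_or] at hx hy
    by_cases hx' : x = u ∨ x = v <;> by_cases hy' : y = u ∨ y = v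
    · have hus : u ∉ ({u, v}ᶜ : Set X) := by simp
      have hvs : v ∉ ({u, v}ᶜ : Set X) := by simp
      refine wcWin.succ ?_
      rcases hx' with rfl | rfl
      · have := ih (W := insert x W) (C := insert y C) (by grind) h₁
        rwa [Set.preimage_val_insert_of_notMem hus,
          Set.preimage_val_insert_of_notMem (by grind)] at this
      · have := ih (W := insert y W) (C := insert x C) (by grind) h₂
        rwa [Set.preimage_val_insert_of_notMem (by grind),
          Set.preimage_val_insert_of_notMem hvs] at this
    · exact (not_wcWin_of_mem_or_mem huv (by grind) (by grind) (by grind) h₂).elim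
    · exact (not_wcWin_of_mem_or_mem huv (by grind) (by grind) (by grind) h₁).elim
    · have hxS : x ∈ ({u, v}ᶜ : Set X) := by simpa using hx'
      have hyS : y ∈ ({u, v}ᶜ : Set X) := by simpa using hy'
      refine Or.inr ⟨⟨x, hxS⟩, ⟨y, hyS⟩, by simpa using hxy, by simp [hx], by simp [hy], ?_, ?_⟩
      · rw [← Set.preimage_val_insert_of_mem, ← Set.preimage_val_insert_of_mem]
        exact ih (by grind) h₁
      · rw [← Set.preimage_val_insert_of_mem, ← Set.preimage_val_insert_of_mem]
        exact ih (by grind) h₂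

end Reduction

section Pairing

variable {X : Type} [Finite X] {f : X → X}

theorem wcWin_pairing (hf : Function.Involutive f) (hfix : ∀ x, f x ≠ x) {m k : ℕ}
    {S W C : Set X} (hS : S.ncard = 2 * k) (hSf : Set.MapsTo f S S) (hSfree : ∀ x ∈ S, x ∉ W ∪ C)
    (hW : ∀ x ∉ S, x ∈ W ∨ f x ∈ W) (hm : W.ncard + k ≤ m) :
    wcWin {D | (∀ x, x ∈ D ∨ f x ∈ D) ∧ D.ncard ≤ m} k W C := by
  induction k generalizing S W C with
  | zero =>
    obtain rfl : S = ∅ := (Set.ncard_eq_zero).mp (by omega)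
    exact ⟨W, ⟨fun x ↦ hW x (Set.notMem_empty x), by omega⟩, subset_rfl⟩
  | succ k ih =>
    obtain ⟨x, hx⟩ : S.Nonempty := Set.nonempty_of_ncard_ne_zero (by omega)
    have hpair : ({x, f x} : Set X) ⊆ S := Set.insert_subset hx (Set.singleton_subset_iff.2 (hSf hx))
    have hS' : (S \ {x, f x}).ncard = 2 * k := by
      rw [Set.ncard_sdiff hpair, Set.ncard_pair (hfix x).symm]; omega
    have hbranch : ∀ a ∈ ({x, f x} : Set X),
        wcWin {D | (∀ x, x ∈ D ∨ f x ∈ D) ∧ D.ncard ≤ m} k (insert a W) (insert (f a) C) := by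
      intro a ha
      refine ih hS' (fun z hz ↦ ?_) (fun z hz ↦ ?_) (fun z hz ↦ ?_) ?_
      · have := hf z; have := hf x; have := hSf hz.1; grind
      · have := hf x; have := hSfree z hz.1; grind
      · have := hf x; have := hW z; grind
      · have := Set.ncard_insert_le a W; omega
    refine Or.inr ⟨x, f x, (hfix x).symm, hSfree x hx, hSfree _ (hSf hx), hbranch x (by simp), ?_⟩
    simpa [hf x] using hbranch (f x) (by simp)

end Pairing

section Domination

variable {V : Type} {G : SimpleGraph V}

theorem IsDomSet.mem_or_mem_of_neighborSet_eq {D : Set V} (hD : IsDomSet G D) {u v : V}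
    (huv : G.neighborSet u = {v}) : u ∈ D ∨ v ∈ D := by
  rcases hD u with hu | ⟨w, hw, hwu⟩
  · exact .inl hu
  · have hw' : w ∈ G.neighborSet u := hwu.symm
    rw [huv, Set.mem_singleton_iff] at hw'
    exact .inr (hw' ▸ hw)

theorem IsDomSet.preimage_val {D S : Set V} (hD : IsDomSet G D)
    (hS : ∀ a ∈ D, ∀ b ∈ S, G.Adj a b → a ∈ S) : IsDomSet (G.induce S) (Subtype.val ⁻¹' D) := by
  intro ⟨b, hb⟩
  rcases hD b with h | ⟨a, ha, hab⟩
  · exact .inl h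
  · exact .inr ⟨⟨a, hS a ha b hb hab⟩, ha, hab⟩

theorem IsDomSet.induce_compl_pair [Finite V] {D : Set V} (hD : IsDomSet G D) {u v : V}
    (hleaf : G.neighborSet u = {v}) (hv : v ∉ D) :
    IsDomSet (G.induce {u, v}ᶜ) (Subtype.val ⁻¹' D) ∧
      (Subtype.val ⁻¹' D : Set ({u, v}ᶜ : Set V)).ncard < D.ncard := by
  refine ⟨hD.preimage_val fun w hw x hx hwx ↦ ?_,
    Set.ncard_preimage_val_lt ((hD.mem_or_mem_of_neighborSet_eq hleaf).resolve_right hv) (by simp)⟩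
  simp only [Set.mem_compl_iff, Set.mem_insert_iff, Set.mem_singleton_iff, not_or] at hx ⊢
  refine ⟨fun hwu ↦ hx.2 ?_, fun hwv ↦ hv (hwv ▸ hw)⟩
  subst hwu
  simpa [hleaf] using (SimpleGraph.mem_neighborSet _ _ _).2 hwx

end Domination

namespace SimpleGraph

variable {V : Type} {G : SimpleGraph V}

theorem IsAcyclic.exists_neighborSet_eq_singleton [Finite V] (hG : G.IsAcyclic) {a b : V}
    (hab : G.Adj a b) : ∃ u v, G.neighborSet u = {v} := by
  have : Nonempty V := ⟨a⟩
  obtain ⟨u, v, p, hp, hmax⟩ := Walk.exists_isPath_forall_isPath_length_le_length G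
  have hnil : ¬ p.Nil := by
    have := hmax a b _ (Path.singleton hab).2
    rw [← Walk.length_eq_zero_iff]; simp at this; omega
  refine ⟨u, p.snd, Set.eq_singleton_iff_unique_mem.2 ⟨p.adj_snd hnil, fun w huw ↦ ?_⟩⟩
  refine hG.eq_snd_of_adj_start hp huw ?_
  by_contra hw
  have := hmax w v _ (hp.cons hw (h := G.adj_symm huw))
  simp at this

theorem exists_isPerfectMatching_of_induce_compl_pair {u v : V} (huv : G.Adj u v)
    {M : (G.induce {u, v}ᶜ).Subgraph} (hM : M.IsPerfectMatching) :
    ∃ M : G.Subgraph, M.IsPerfectMatching := by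
  let N := M.map (Embedding.induce _).toHom
  have hN : N.IsMatching := hM.1.map _ Subtype.val_injective
  refine ⟨N ⊔ G.subgraphOfAdj huv, hN.sup (.subgraphOfAdj huv) ?_, fun w ↦ ?_⟩
  · rw [hN.support_eq_verts, (Subgraph.IsMatching.subgraphOfAdj huv).support_eq_verts]
    simp +contextual [N, Set.disjoint_left]
  · by_cases hw : w ∈ ({u, v} : Set V)
    · exact .inr (by simpa using hw)
    · exact .inl ⟨⟨w, hw⟩, hM.2 _, rfl⟩

theorem IsAcyclic.exists_isPerfectMatching_of_wcWin [Finite V] (hG : G.IsAcyclic) {s t : ℕ}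
    (h : wcWin {D | IsDomSet G D ∧ D.ncard ≤ s} t ∅ ∅) :
    (∃ M : G.Subgraph, M.IsPerfectMatching) ∧ Nat.card V ≤ 2 * s := by
  induction hn : Nat.card V using Nat.strong_induction_on generalizing V s with
  | _ n ih =>
  rcases isEmpty_or_nonempty V with hV | ⟨⟨a⟩⟩
  · exact ⟨⟨⊥, Subgraph.isPerfectMatching_iff.2 isEmptyElim⟩, by simp [← hn]⟩
  by_cases hedge : ∃ a b, G.Adj a b
  swap
  · push Not at hedge
    refine (not_wcWin_of_forall_mem (u := a) (fun e he ↦ ?_) (Set.notMem_empty a) h).elim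
    exact (he.1 a).resolve_right fun ⟨b, _, hba⟩ ↦ hedge b a hba
  obtain ⟨a, b, hab⟩ := hedge
  obtain ⟨u, v, hleaf⟩ := hG.exists_neighborSet_eq_singleton hab
  have huv : G.Adj u v := by simp [← mem_neighborSet, hleaf]
  have hcard : Nat.card ({u, v}ᶜ : Set V) + 2 = n := by
    rw [← hn, ← Set.ncard_add_ncard_compl {u, v}, Set.ncard_pair huv.ne, Nat.card_coe_set_eq]
    omega
  obtain ⟨e, (he : IsDomSet G e), hes⟩ := h.nonempty
  have hs : 1 ≤ s := by
    rcases he.mem_or_mem_of_neighborSet_eq hleaf with h | h <;>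
      have := (Set.ncard_pos).2 ⟨_, h⟩ <;> omega
  have hsmall := h.restrict_compl_pair
    (P' := {D | IsDomSet (G.induce {u, v}ᶜ) D ∧ D.ncard ≤ s - 1})
    (fun e he hv ↦ (IsDomSet.mem_or_mem_of_neighborSet_eq he.1 hleaf).resolve_right hv)
    (fun e he hv ↦ have h := IsDomSet.induce_compl_pair he.1 hleaf hv; ⟨h.1, by grind⟩)
    (by simp)
  simp only [Set.preimage_empty] at hsmall
  obtain ⟨⟨M, hM⟩, hM_card⟩ := ih _ (by omega) (hG.induce _) hsmall rfl
  exact ⟨exists_isPerfectMatching_of_induce_compl_pair huv hM, by omega⟩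

theorem Subgraph.IsPerfectMatching.wcWin_isDomSet [Finite V] {M : G.Subgraph}
    (hM : M.IsPerfectMatching) :
    wcWin {D | IsDomSet G D ∧ D.ncard ≤ Nat.card V / 2} (Nat.card V / 2) ∅ ∅ := by
  choose f hf using fun v ↦ (Subgraph.isPerfectMatching_iff.1 hM v).exists
  have hinv : Function.Involutive f := fun v ↦ hM.1.eq_of_adj_left (hf (f v)) (hf v).symm
  have hfix : ∀ v, f v ≠ v := fun v h ↦ (M.adj_sub (hf v)).ne h.symm
  have hcard : Nat.card V = 2 * (Nat.card V / 2) := by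
    have := Fintype.ofFinite V
    rw [Nat.card_eq_fintype_card]
    exact (Nat.two_mul_div_two_of_even hM.even_card).symm
  refine (wcWin_pairing hinv hfix (m := Nat.card V / 2) (S := Set.univ) (by rwa [Set.ncard_univ])
    (Set.mapsTo_univ _ _) (by simp) (by simp) (by simp)).mono ?_
  rintro D ⟨hD, hD_card⟩
  exact ⟨fun v ↦ (hD v).imp_right fun h ↦ ⟨f v, h, (M.adj_sub (hf v)).symm⟩, hD_card⟩

end SimpleGraph

/-- Theorem 1.7. Let `T` be a tree on `n` vertices. If `T`
has a perfect matching then `γ_WC(T) = s_WC(T) = n/2`; otherwise Dominator does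
not win the unbiased Waiter-Client domination game on `T`, i.e.
`γ_WC(T) = s_WC(T) = ∞`. -/
theorem wc_domination_trees {V : Type} [Finite V] (G : SimpleGraph V)
    (hT : G.IsTree) :
    ((∃ M : G.Subgraph, M.IsPerfectMatching) →
      gammaWC G = ((Nat.card V / 2 : ℕ) : ℕ∞) ∧
      sizeWC G = ((Nat.card V / 2 : ℕ) : ℕ∞)) ∧
    ((¬ ∃ M : G.Subgraph, M.IsPerfectMatching) →
      gammaWC G = ⊤ ∧ sizeWC G = ⊤) := by
  have hsize {s t : ℕ} (h : wcWin {D | IsDomSet G D ∧ D.ncard ≤ s} t ∅ ∅) :=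
    hT.isAcyclic.exists_isPerfectMatching_of_wcWin h
  have hrounds {t : ℕ} (h : wcWin {D | IsDomSet G D} t ∅ ∅) :=
    hsize (h.ncard_le (s := t) (by simp))
  constructor
  · rintro ⟨M, hM⟩
    have hpair := hM.wcWin_isDomSet
    refine ⟨le_antisymm (sInf_le ⟨_, rfl, hpair.mono fun D hD ↦ hD.1⟩) ?_,
      le_antisymm (sInf_le ⟨_, rfl, hpair.mono_rounds (Nat.div_le_self _ _)⟩) ?_⟩
    · refine le_sInf fun _ ⟨t, ht, h⟩ ↦ ht ▸ Nat.cast_le.2 ?_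
      have := (hrounds h).2; omega
    · refine le_sInf fun _ ⟨s, hs, h⟩ ↦ hs ▸ Nat.cast_le.2 ?_
      have := (hsize h).2; omega
  · intro hno
    refine ⟨sInf_eq_top.2 fun _ ⟨t, _, h⟩ ↦ ?_, sInf_eq_top.2 fun _ ⟨s, _, h⟩ ↦ ?_⟩
    exacts [(hno (hrounds h).1).elim, (hno (hsize h).1).elim]
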